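/- Let A, B be positive definite n×n complex matrices and X an n×n complex matrix such that the block matrix [[A, X], [X*, B]] is PPT. Let X = U|X| be a polar decomposition of X with U unitary. Then |X| ≤ (A # B) # (U*(A # B)U) in the Loewner order. -/

import Mathlib

open Matrix ComplexOrder
open scoped Classical

/-! `Matrix.PosSemidef.sqrt` (and `posSemidef_sqrt`) were removed from Mathlib; restored with
their December 2024 definition. -/
namespace Matrix.PosSemidef
variable {n : Type*} [Fintype n] [DecidableEq n] {𝕜 : Type*} [RCLike 𝕜]
noncomputable def sqrt {A : Matrix n n 𝕜} (hA : A.PosSemidef) : Matrix n n 𝕜 :=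
  hA.1.eigenvectorUnitary.1 * diagonal ((↑) ∘ (√·) ∘ hA.1.eigenvalues) *
    (star hA.1.eigenvectorUnitary : Matrix n n 𝕜)
lemma posSemidef_sqrt {A : Matrix n n 𝕜} (hA : A.PosSemidef) : PosSemidef hA.sqrt := by
  apply PosSemidef.mul_mul_conjTranspose_same
  refine posSemidef_diagonal_iff.mpr fun i ↦ ?_
  rw [Function.comp_apply, RCLike.nonneg_iff]
  constructor
  · simp only [RCLike.ofReal_re]
    exact Real.sqrt_nonneg _
  · simp only [RCLike.ofReal_im]
end Matrix.PosSemidef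

/-- The geometric mean `P # Q = P^{1/2} (P^{-1/2} Q P^{-1/2})^{1/2} P^{1/2}` of two
positive definite complex matrices (junk value `0` if `P` or `Q` is not positive definite). -/
noncomputable def geomMean {n : ℕ} (P Q : Matrix (Fin n) (Fin n) ℂ) :
    Matrix (Fin n) (Fin n) ℂ :=
  if h : P.PosDef ∧ Q.PosDef then
    have hs : ((h.1.posSemidef.sqrt⁻¹) * Q * (h.1.posSemidef.sqrt⁻¹)).PosSemidef := by
      have h1 := h.2.posSemidef.conjTranspose_mul_mul_same (h.1.posSemidef.sqrt⁻¹)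
      rwa [Matrix.conjTranspose_nonsing_inv, h.1.posSemidef.posSemidef_sqrt.1.eq] at h1
    h.1.posSemidef.sqrt * hs.sqrt * h.1.posSemidef.sqrt
  else 0

/-- The absolute value `|X| = (XᴴX)^{1/2}` of a complex matrix. -/
noncomputable def mAbs {n : ℕ} (X : Matrix (Fin n) (Fin n) ℂ) :
    Matrix (Fin n) (Fin n) ℂ :=
  (Matrix.posSemidef_conjTranspose_mul_self X).sqrt


namespace Matrix.PosSemidef
variable {n : Type*} [Fintype n] [DecidableEq n] {𝕜 : Type*} [RCLike 𝕜]
lemma sqrt_eq_cfc {A : Matrix n n 𝕜} (hA : A.PosSemidef) : hA.sqrt = cfc Real.sqrt A := by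
  rw [hA.1.cfc_eq]
  simp [IsHermitian.cfc, sqrt, Unitary.conjStarAlgAut_apply]
lemma sqrt_spec {A : Matrix n n 𝕜} (hA : A.PosSemidef) :
    (spectrum ℝ A).EqOn (fun x => Real.sqrt x * Real.sqrt x) id := by
  intro x hx
  rw [hA.1.spectrum_real_eq_range_eigenvalues] at hx
  obtain ⟨i, rfl⟩ := hx
  exact Real.mul_self_sqrt (hA.eigenvalues_nonneg i)
lemma sqrt_mul_self {A : Matrix n n 𝕜} (hA : A.PosSemidef) : hA.sqrt * hA.sqrt = A := by
  rw [sqrt_eq_cfc, ← cfc_mul Real.sqrt Real.sqrt A, cfc_congr hA.sqrt_spec,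
    cfc_id ℝ A hA.1.isSelfAdjoint]
lemma eq_sqrt_of_sq_eq {A : Matrix n n 𝕜} (hA : A.PosSemidef) {B : Matrix n n 𝕜}
    (hB : B.PosSemidef) (hAB : A ^ 2 = B) : A = hB.sqrt := by
  rw [sqrt_eq_cfc, ← hAB, ← cfc_pow_id (R := ℝ) A 2 hA.1.isSelfAdjoint,
    ← cfc_comp Real.sqrt (fun x => x ^ 2) A hA.1.isSelfAdjoint]
  conv_lhs => rw [← cfc_id ℝ A hA.1.isSelfAdjoint]
  apply cfc_congr
  intro x hx
  rw [hA.1.spectrum_real_eq_range_eigenvalues] at hx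
  obtain ⟨i, rfl⟩ := hx
  exact (Real.sqrt_sq (hA.eigenvalues_nonneg i)).symm
end Matrix.PosSemidef

namespace StmtAux

variable {n : ℕ}

lemma conj_sub_psd {M N W : Matrix (Fin n) (Fin n) ℂ} (h : (N - M).PosSemidef) :
    (W * N * Wᴴ - W * M * Wᴴ).PosSemidef := by
  have h2 := h.mul_mul_conjTranspose_same W
  rwa [Matrix.mul_sub, Matrix.sub_mul] at h2

lemma posDef_of_posSemidef_isUnit {M : Matrix (Fin n) (Fin n) ℂ}
    (h : M.PosSemidef) (hu : IsUnit M) : M.PosDef := by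
  refine .of_dotProduct_mulVec_pos h.1 fun x hx => lt_of_le_of_ne (h.dotProduct_mulVec_nonneg x) fun h0 => hx ?_
  have h2 : M *ᵥ x = 0 := (h.dotProduct_mulVec_zero_iff x).mp h0.symm
  have h3 := congrArg (M⁻¹ *ᵥ ·) h2
  simpa [Matrix.mulVec_mulVec,
    Matrix.nonsing_inv_mul M ((Matrix.isUnit_iff_isUnit_det M).mp hu),
    Matrix.one_mulVec] using h3

lemma posDef_sqrt {M : Matrix (Fin n) (Fin n) ℂ} (hM : M.PosDef) :
    hM.posSemidef.sqrt.PosDef := by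
  apply posDef_of_posSemidef_isUnit hM.posSemidef.posSemidef_sqrt
  rw [Matrix.isUnit_iff_isUnit_det]
  have h1 : hM.posSemidef.sqrt.det * hM.posSemidef.sqrt.det = M.det := by
    rw [← Matrix.det_mul, hM.posSemidef.sqrt_mul_self]
  have h2 : IsUnit M.det := isUnit_iff_ne_zero.mpr (ne_of_gt hM.det_pos)
  rw [← h1] at h2
  exact isUnit_of_mul_isUnit_left h2

lemma posDef_conj {M P : Matrix (Fin n) (Fin n) ℂ} (hM : M.PosDef) (hP : IsUnit P) :
    (Pᴴ * M * P).PosDef := by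
  refine .of_dotProduct_mulVec_pos (hM.posSemidef.conjTranspose_mul_mul_same P).1 fun x hx => ?_
  have hPx : P *ᵥ x ≠ 0 := by
    intro h0
    apply hx
    have h3 := congrArg (P⁻¹ *ᵥ ·) h0
    simpa [Matrix.mulVec_mulVec,
      Matrix.nonsing_inv_mul P ((Matrix.isUnit_iff_isUnit_det P).mp hP),
      Matrix.one_mulVec] using h3
  have h2 := hM.dotProduct_mulVec_pos hPx
  have h4 : star x ⬝ᵥ ((Pᴴ * M * P) *ᵥ x) = star (P *ᵥ x) ⬝ᵥ (M *ᵥ (P *ᵥ x)) := by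
    rw [star_mulVec, ← Matrix.mulVec_mulVec, ← Matrix.mulVec_mulVec,
      Matrix.dotProduct_mulVec]
  rw [h4]; exact h2

/-- Operator monotonicity of the matrix square root. -/
lemma sqrt_mono {M N : Matrix (Fin n) (Fin n) ℂ} (hM : M.PosSemidef) (hN : N.PosSemidef)
    (h : (N - M).PosSemidef) : (hN.sqrt - hM.sqrt).PosSemidef := by
  have hMs := hM.posSemidef_sqrt
  have hNs := hN.posSemidef_sqrt
  have hD : (hN.sqrt - hM.sqrt).IsHermitian := hNs.1.sub hMs.1
  apply hD.posSemidef_iff_eigenvalues_nonneg.mpr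
  intro i
  by_contra hneg
  simp only [Pi.zero_apply, not_le] at hneg
  set lam : ℝ := hD.eigenvalues i with hlam
  set v : Fin n → ℂ := ⇑(hD.eigenvectorBasis i) with hvdef
  have hv : (hN.sqrt - hM.sqrt) *ᵥ v = (lam : ℂ) • v := by
    have := hD.mulVec_eigenvectorBasis i
    rw [this]
    ext j
    simp only [Pi.smul_apply, Complex.real_smul, smul_eq_mul]
    rfl
  have hvne : v ≠ 0 := by
    have h5 := hD.eigenvectorBasis.orthonormal.ne_zero i
    intro hc
    apply h5
    ext j
    exact congrFun hc j
  -- decomposition N - M = √N * D + D * √M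
  have hdec : N - M = hN.sqrt * (hN.sqrt - hM.sqrt) + (hN.sqrt - hM.sqrt) * hM.sqrt := by
    rw [Matrix.mul_sub, Matrix.sub_mul, hN.sqrt_mul_self, hM.sqrt_mul_self]
    abel
  have hterm1 : star v ⬝ᵥ ((hN.sqrt * (hN.sqrt - hM.sqrt)) *ᵥ v)
      = (lam : ℂ) * (star v ⬝ᵥ (hN.sqrt *ᵥ v)) := by
    rw [← Matrix.mulVec_mulVec, hv, Matrix.mulVec_smul, dotProduct_smul, smul_eq_mul]
  have hterm2 : star v ⬝ᵥ (((hN.sqrt - hM.sqrt) * hM.sqrt) *ᵥ v)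
      = (lam : ℂ) * (star v ⬝ᵥ (hM.sqrt *ᵥ v)) := by
    rw [← Matrix.mulVec_mulVec, Matrix.dotProduct_mulVec]
    have h6 : star v ᵥ* (hN.sqrt - hM.sqrt) = star ((hN.sqrt - hM.sqrt) *ᵥ v) := by
      rw [star_mulVec, hD.eq]
    rw [h6, hv, star_smul, smul_dotProduct]
    simp [smul_eq_mul]
  have hkey : star v ⬝ᵥ ((N - M) *ᵥ v)
      = (lam : ℂ) * (star v ⬝ᵥ (hN.sqrt *ᵥ v) + star v ⬝ᵥ (hM.sqrt *ᵥ v)) := by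
    rw [hdec, Matrix.add_mulVec, dotProduct_add, hterm1, hterm2, mul_add]
  have hcnonnegN : 0 ≤ star v ⬝ᵥ (hN.sqrt *ᵥ v) := hNs.dotProduct_mulVec_nonneg v
  have hcnonnegM : 0 ≤ star v ⬝ᵥ (hM.sqrt *ᵥ v) := hMs.dotProduct_mulVec_nonneg v
  have hge : 0 ≤ (lam : ℂ) * (star v ⬝ᵥ (hN.sqrt *ᵥ v) + star v ⬝ᵥ (hM.sqrt *ᵥ v)) := by
    rw [← hkey]; exact h.dotProduct_mulVec_nonneg v
  set c : ℂ := star v ⬝ᵥ (hN.sqrt *ᵥ v) + star v ⬝ᵥ (hM.sqrt *ᵥ v) with hcdef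
  have hc0 : 0 ≤ c := add_nonneg hcnonnegN hcnonnegM
  have hcim : c.im = 0 := (Complex.nonneg_iff.mp hc0).2.symm
  have hcre : 0 ≤ c.re := (Complex.nonneg_iff.mp hc0).1
  have hprod : 0 ≤ ((lam : ℂ) * c).re := (Complex.nonneg_iff.mp hge).1
  have hprodre : ((lam : ℂ) * c).re = lam * c.re := by
    simp [Complex.mul_re, hcim]
  rw [hprodre] at hprod
  have hcre0 : c.re = 0 := by
    by_contra h9
    have h10 : 0 < c.re := lt_of_le_of_ne hcre (Ne.symm h9)
    nlinarith
  have hczero : c = 0 := by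
    apply Complex.ext <;> simp [hcre0, hcim]
  -- both summands vanish
  have hNzero : star v ⬝ᵥ (hN.sqrt *ᵥ v) = 0 := by
    have h7 : star v ⬝ᵥ (hN.sqrt *ᵥ v) ≤ 0 := by
      calc star v ⬝ᵥ (hN.sqrt *ᵥ v)
          = c - star v ⬝ᵥ (hM.sqrt *ᵥ v) := by rw [hcdef]; ring
        _ ≤ 0 := by rw [hczero]; simpa using hcnonnegM
    exact le_antisymm h7 hcnonnegN
  have hMzero : star v ⬝ᵥ (hM.sqrt *ᵥ v) = 0 := by
    have h7 : star v ⬝ᵥ (hM.sqrt *ᵥ v) ≤ 0 := by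
      calc star v ⬝ᵥ (hM.sqrt *ᵥ v)
          = c - star v ⬝ᵥ (hN.sqrt *ᵥ v) := by rw [hcdef]; ring
        _ ≤ 0 := by rw [hczero]; simpa using hcnonnegN
    exact le_antisymm h7 hcnonnegM
  have hNv : hN.sqrt *ᵥ v = 0 := (hNs.dotProduct_mulVec_zero_iff v).mp hNzero
  have hMv : hM.sqrt *ᵥ v = 0 := (hMs.dotProduct_mulVec_zero_iff v).mp hMzero
  have hDv : (hN.sqrt - hM.sqrt) *ᵥ v = 0 := by
    rw [Matrix.sub_mulVec, hNv, hMv, sub_zero]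
  rw [hv] at hDv
  rcases smul_eq_zero.mp hDv with h8 | h8
  · exact absurd (by exact_mod_cast h8) (ne_of_lt hneg)
  · exact hvne h8

lemma geomMean_eq {P Q : Matrix (Fin n) (Fin n) ℂ} (hP : P.PosDef) (hQ : Q.PosDef)
    (hmid : ((hP.posSemidef.sqrt⁻¹) * Q * (hP.posSemidef.sqrt⁻¹)).PosSemidef) :
    geomMean P Q = hP.posSemidef.sqrt * hmid.sqrt * hP.posSemidef.sqrt := by
  rw [geomMean, dif_pos ⟨hP, hQ⟩]

lemma geomMean_posDef {P Q : Matrix (Fin n) (Fin n) ℂ} (hP : P.PosDef) (hQ : Q.PosDef) :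
    (geomMean P Q).PosDef := by
  have hP2 : hP.posSemidef.sqrt.PosDef := posDef_sqrt hP
  have hPi : (hP.posSemidef.sqrt⁻¹).PosDef := hP2.inv
  have hmidPD : ((hP.posSemidef.sqrt⁻¹) * Q * (hP.posSemidef.sqrt⁻¹)).PosDef := by
    have h := posDef_conj hQ hPi.isUnit
    rwa [hPi.isHermitian.eq] at h
  rw [geomMean_eq hP hQ hmidPD.posSemidef]
  have hs2 : hmidPD.posSemidef.sqrt.PosDef := posDef_sqrt hmidPD
  have h := posDef_conj hs2 hP2.isUnit
  rwa [hP2.isHermitian.eq] at h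

lemma geomMean_le {P Q T : Matrix (Fin n) (Fin n) ℂ} (hP : P.PosDef) (hQ : Q.PosDef)
    (hT : T.PosSemidef) (h : (Q - T * P⁻¹ * T).PosSemidef) :
    (geomMean P Q - T).PosSemidef := by
  set P2 := hP.posSemidef.sqrt with hP2def
  have hP2PD : P2.PosDef := posDef_sqrt hP
  set Pi := P2⁻¹ with hPidef
  have hPiPD : Pi.PosDef := hP2PD.inv
  have hPiH : Piᴴ = Pi := hPiPD.isHermitian.eq
  have hPinv : P⁻¹ = Pi * Pi := by
    rw [hPidef, ← Matrix.mul_inv_rev, hP.posSemidef.sqrt_mul_self]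
  have hP2Pi : P2 * Pi = 1 :=
    Matrix.mul_nonsing_inv P2 ((Matrix.isUnit_iff_isUnit_det P2).mp hP2PD.isUnit)
  have hPiP2 : Pi * P2 = 1 :=
    Matrix.nonsing_inv_mul P2 ((Matrix.isUnit_iff_isUnit_det P2).mp hP2PD.isUnit)
  have h1 := conj_sub_psd (W := Pi) h
  rw [hPiH] at h1
  set S := Pi * T * Pi with hSdef
  have hSpsd : S.PosSemidef := by
    have h2 := hT.mul_mul_conjTranspose_same Pi
    rwa [hPiH] at h2
  have hmidmul : Pi * (T * P⁻¹ * T) * Pi = S * S := by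
    rw [hPinv, hSdef]; simp only [Matrix.mul_assoc]
  rw [hmidmul] at h1
  have hSS : (S * S).PosSemidef := by
    have h2 := Matrix.posSemidef_conjTranspose_mul_self S
    rwa [hSpsd.isHermitian.eq] at h2
  have hmidPD : (Pi * Q * Pi).PosDef := by
    have h2 := posDef_conj hQ hPiPD.isUnit
    rwa [hPiH] at h2
  have hmono := sqrt_mono hSS hmidPD.posSemidef h1
  have hsqrtSS : S = hSS.sqrt := hSpsd.eq_sqrt_of_sq_eq hSS (by rw [pow_two])
  rw [← hsqrtSS] at hmono
  have h2 := conj_sub_psd (W := P2) hmono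
  rw [hP2PD.isHermitian.eq] at h2
  have hTeq : P2 * S * P2 = T := by
    have e : P2 * (Pi * T * Pi) * P2 = (P2 * Pi) * (T * (Pi * P2)) := by
      simp only [Matrix.mul_assoc]
    rw [hSdef, e, hP2Pi, hPiP2, mul_one, one_mul]
  rw [hTeq] at h2
  rw [geomMean_eq hP hQ hmidPD.posSemidef]
  exact h2

lemma key {A B X : Matrix (Fin n) (Fin n) ℂ} (hA : A.PosDef) (hB : B.PosDef)
    (h1 : (B - Xᴴ * A⁻¹ * X).PosSemidef) (h2 : (B - X * A⁻¹ * Xᴴ).PosSemidef) :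
    (geomMean A B - X * (geomMean A B)⁻¹ * Xᴴ).PosSemidef := by
  set A2 := hA.posSemidef.sqrt with hA2def
  have hA2PD : A2.PosDef := posDef_sqrt hA
  set Ai := A2⁻¹ with hAidef
  have hAiPD : Ai.PosDef := hA2PD.inv
  have hAiH : Aiᴴ = Ai := hAiPD.isHermitian.eq
  have hAinv : A⁻¹ = Ai * Ai := by
    rw [hAidef, ← Matrix.mul_inv_rev, hA.posSemidef.sqrt_mul_self]
  have hA2Ai : A2 * Ai = 1 :=
    Matrix.mul_nonsing_inv A2 ((Matrix.isUnit_iff_isUnit_det A2).mp hA2PD.isUnit)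
  have hAiA2 : Ai * A2 = 1 :=
    Matrix.nonsing_inv_mul A2 ((Matrix.isUnit_iff_isUnit_det A2).mp hA2PD.isUnit)
  set C := Ai * B * Ai with hCdef
  have hCPD : C.PosDef := by
    have h3 := posDef_conj hB hAiPD.isUnit
    rwa [hAiH] at h3
  set Y := Ai * X * Ai with hYdef
  have hYH : Yᴴ = Ai * Xᴴ * Ai := by
    rw [hYdef]
    simp [Matrix.conjTranspose_mul, hAiH, Matrix.mul_assoc]
  have h1' : (C - Yᴴ * Y).PosSemidef := by
    have h3 := conj_sub_psd (W := Ai) h1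
    rw [hAiH] at h3
    have h4 : Ai * (Xᴴ * A⁻¹ * X) * Ai = Yᴴ * Y := by
      rw [hAinv, hYH, hYdef]; simp only [Matrix.mul_assoc]
    rwa [h4] at h3
  have h2' : (C - Y * Yᴴ).PosSemidef := by
    have h3 := conj_sub_psd (W := Ai) h2
    rw [hAiH] at h3
    have h4 : Ai * (X * A⁻¹ * Xᴴ) * Ai = Y * Yᴴ := by
      rw [hAinv, hYH, hYdef]; simp only [Matrix.mul_assoc]
    rwa [h4] at h3
  set C2 := hCPD.posSemidef.sqrt with hC2def
  have hC2PD : C2.PosDef := posDef_sqrt hCPD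
  set Ci := C2⁻¹ with hCidef
  have hCiPD : Ci.PosDef := hC2PD.inv
  have hCiH : Ciᴴ = Ci := hCiPD.isHermitian.eq
  have hC2Ci : C2 * Ci = 1 :=
    Matrix.mul_nonsing_inv C2 ((Matrix.isUnit_iff_isUnit_det C2).mp hC2PD.isUnit)
  have hCiC2 : Ci * C2 = 1 :=
    Matrix.nonsing_inv_mul C2 ((Matrix.isUnit_iff_isUnit_det C2).mp hC2PD.isUnit)
  set Z := Y * Ci * Yᴴ with hZdef
  have hZpsd : Z.PosSemidef := hCiPD.posSemidef.mul_mul_conjTranspose_same Y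
  have hZZle : (C - Z * Z).PosSemidef := by
    have h5 := conj_sub_psd (W := Y * Ci) h1'
    have hWH : (Y * Ci)ᴴ = Ci * Yᴴ := by rw [Matrix.conjTranspose_mul, hCiH]
    rw [hWH] at h5
    have e1 : Y * Ci * C * (Ci * Yᴴ) = Y * Yᴴ := by
      have eC : C = C2 * C2 := (hCPD.posSemidef.sqrt_mul_self).symm
      have e : Y * Ci * (C2 * C2) * (Ci * Yᴴ) = Y * ((Ci * C2) * ((C2 * Ci) * Yᴴ)) := by
        simp only [Matrix.mul_assoc]
      rw [eC, e, hCiC2, hC2Ci, one_mul, one_mul]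
    have e2 : Y * Ci * (Yᴴ * Y) * (Ci * Yᴴ) = Z * Z := by
      rw [hZdef]; simp only [Matrix.mul_assoc]
    rw [e1, e2] at h5
    have h6 := h2'.add h5
    rwa [sub_add_sub_cancel] at h6
  have hZZpsd : (Z * Z).PosSemidef := by
    have h5 := Matrix.posSemidef_conjTranspose_mul_self Z
    rwa [hZpsd.isHermitian.eq] at h5
  have hmono := sqrt_mono hZZpsd hCPD.posSemidef hZZle
  have hZeq : Z = hZZpsd.sqrt := hZpsd.eq_sqrt_of_sq_eq hZZpsd (by rw [pow_two])
  rw [← hZeq] at hmono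
  have h6 := conj_sub_psd (W := A2) hmono
  rw [hA2PD.isHermitian.eq] at h6
  have hG : geomMean A B = A2 * C2 * A2 := geomMean_eq hA hB hCPD.posSemidef
  have hGinv : (geomMean A B)⁻¹ = Ai * (Ci * Ai) := by
    rw [hG, Matrix.mul_inv_rev, Matrix.mul_inv_rev]
  have e3 : A2 * Z * A2 = X * (geomMean A B)⁻¹ * Xᴴ := by
    rw [hGinv, hZdef, hYH, hYdef]
    have e : A2 * (Ai * X * Ai * Ci * (Ai * Xᴴ * Ai)) * A2
        = (A2 * Ai) * (X * (Ai * (Ci * Ai)) * ((Xᴴ * (Ai * A2)))) := by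
      simp only [Matrix.mul_assoc]
    rw [e, hA2Ai, hAiA2, one_mul, mul_one]
  rw [← e3, hG]
  exact h6

end StmtAux

theorem stmt8 {n : ℕ} (A B X U : Matrix (Fin n) (Fin n) ℂ)
    (hA : A.PosDef) (hB : B.PosDef)
    (hH : (Matrix.fromBlocks A X Xᴴ B).PosSemidef)
    (hτ : (Matrix.fromBlocks A Xᴴ X B).PosSemidef)
    (hU : U ∈ Matrix.unitaryGroup (Fin n) ℂ)
    (hpolar : X = U * mAbs X) :
    (geomMean (geomMean A B) (Uᴴ * geomMean A B * U) - mAbs X).PosSemidef := by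
  haveI : Invertible A := hA.isUnit.invertible
  have h1 : (B - Xᴴ * A⁻¹ * X).PosSemidef := (Matrix.PosDef.fromBlocks₁₁ X B hA).mp hH
  have hτ' : (Matrix.fromBlocks A Xᴴ Xᴴᴴ B).PosSemidef := by
    rwa [Matrix.conjTranspose_conjTranspose]
  have h2 : (B - X * A⁻¹ * Xᴴ).PosSemidef := by
    have h3 := (Matrix.PosDef.fromBlocks₁₁ Xᴴ B hA).mp hτ'
    rwa [Matrix.conjTranspose_conjTranspose] at h3
  have hkey := StmtAux.key hA hB h1 h2
  set G := geomMean A B with hGdef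
  have hG : G.PosDef := StmtAux.geomMean_posDef hA hB
  set T := mAbs X with hTdef
  have hTpsd : T.PosSemidef := (Matrix.posSemidef_conjTranspose_mul_self X).posSemidef_sqrt
  have hU1 : star U * U = 1 := (Unitary.mem_iff.mp hU).1
  have hU2 : U * star U = 1 := (Unitary.mem_iff.mp hU).2
  have hUstar : Uᴴ * U = 1 := by rwa [← Matrix.star_eq_conjTranspose]
  have hUX : Uᴴ * X = T := by
    rw [hpolar, ← Matrix.mul_assoc, hUstar, Matrix.one_mul]
  have hXU : Xᴴ * U = T := by
    have h3 := congrArg Matrix.conjTranspose hUX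
    rwa [Matrix.conjTranspose_mul, Matrix.conjTranspose_conjTranspose,
      hTpsd.isHermitian.eq] at h3
  have h3 := StmtAux.conj_sub_psd (W := Uᴴ) hkey
  rw [Matrix.conjTranspose_conjTranspose] at h3
  have e : Uᴴ * (X * G⁻¹ * Xᴴ) * U = T * G⁻¹ * T := by
    have e1 : Uᴴ * (X * G⁻¹ * Xᴴ) * U = (Uᴴ * X) * (G⁻¹ * (Xᴴ * U)) := by
      simp only [Matrix.mul_assoc]
    rw [e1, hUX, hXU, ← Matrix.mul_assoc]
  rw [e] at h3
  have hUisUnit : IsUnit U := ⟨⟨U, star U, hU2, hU1⟩, rfl⟩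
  have hQ : (Uᴴ * G * U).PosDef := StmtAux.posDef_conj hG hUisUnit
  exact StmtAux.geomMean_le hG hQ hTpsd h3
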